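/- arXiv:2505.15284 — 2 statements merged into one kernel-verified Lean document; each statement's English description precedes it below -/
import Mathlib

section
/- Let Z ∈ ℝ^{N×M} be the matrix whose rows are the mapped training features, K = Z Zᵀ its kernel matrix, and let {v_j}_{j∈Q} be a finite orthonormal family in ℝ^N with K v_j = λ_j v_j and λ_j > 0 for each j ∈ Q. Set u_j = λ_j^{−1/2} Zᵀ v_j (so that {u_j}_{j∈Q} is an orthonormal family of feature-space principal directions). Then for any vector w ∈ ℝ^M with kernel vector k_w = Z w ∈ ℝ^N, the squared reconstruction error of w with respect to the subspace spanned by {u_j}_{j∈Q} can be computed purely from kernel quantities: ‖w − Σ_{j∈Q} ⟨u_j, w⟩ u_j‖₂² = ‖w‖₂² − Σ_{j∈Q} (v_jᵀ k_w)² / λ_j. -/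
/-!
Since `(Zᵀ vᵢ) ⬝ (Zᵀ vⱼ) = vᵢᵀ K vⱼ = λⱼ δᵢⱼ`, the directions `uⱼ = λⱼ^{-1/2} Zᵀ vⱼ` are orthonormal,
and `⟨uⱼ, w⟩ = λⱼ^{-1/2} vⱼᵀ Z w = λⱼ^{-1/2} vⱼᵀ k_w`. The identity is then the Pythagorean
equality `‖w - P w‖² = ‖w‖² - Σⱼ ⟨uⱼ, w⟩²` for the orthogonal projection `P` onto `span {uⱼ}`.
-/

open Matrix
open scoped InnerProductSpace

theorem Orthonormal.norm_sub_sum_inner_smul_sq {𝕜 E ι : Type*} [RCLike 𝕜] [NormedAddCommGroup E]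
    [InnerProductSpace 𝕜 E] {v : ι → E} (hv : Orthonormal 𝕜 v) (s : Finset ι) (x : E) :
    ‖x - ∑ i ∈ s, ⟪v i, x⟫_𝕜 • v i‖ ^ 2 = ‖x‖ ^ 2 - ∑ i ∈ s, ‖⟪v i, x⟫_𝕜‖ ^ 2 := by
  set p := ∑ i ∈ s, ⟪v i, x⟫_𝕜 • v i
  have hpx : ⟪p, x⟫_𝕜 = ⟪p, p⟫_𝕜 := by
    simp only [p, hv.inner_sum, sum_inner, inner_smul_left, inner_conj_symm]
  have hp : ‖p‖ ^ 2 = ∑ i ∈ s, ‖⟪v i, x⟫_𝕜‖ ^ 2 := by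
    rw [← RCLike.ofReal_inj (K := 𝕜)]
    push_cast
    rw [← inner_self_eq_norm_sq_to_K, hv.inner_sum]
    exact Finset.sum_congr rfl fun i _ => RCLike.conj_mul _
  have hpythag := norm_add_sq_eq_norm_sq_add_norm_sq_of_inner_eq_zero (𝕜 := 𝕜) p (x - p)
    (by rw [inner_sub_right, hpx, sub_self])
  rw [add_sub_cancel, ← sq, ← sq, ← sq, hp] at hpythag
  linarith

theorem orthonormal_toLp_iff_dotProduct {n ι : Type*} [Fintype n] [DecidableEq ι] {u : ι → n → ℝ} :
    Orthonormal ℝ (fun j => WithLp.toLp 2 (u j)) ↔ ∀ i j, u i ⬝ᵥ u j = if i = j then 1 else 0 := by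
  simp only [orthonormal_iff_ite, EuclideanSpace.inner_toLp_toLp, star_trivial, dotProduct_comm]

theorem transpose_mulVec_dotProduct_transpose_mulVec {m n R : Type*} [Fintype m] [Fintype n]
    [CommSemiring R] (Z : Matrix m n R) (x y : m → R) :
    Zᵀ *ᵥ x ⬝ᵥ Zᵀ *ᵥ y = x ⬝ᵥ (Z * Zᵀ) *ᵥ y := by
  rw [← mulVec_mulVec, dotProduct_mulVec x Z, mulVec_transpose Z x]

section KernelPCA

variable {m n : Type*} [Fintype m] [Fintype n] (Z : Matrix m n ℝ)

noncomputable def principalDirection (lam : ℝ) (v : m → ℝ) : n → ℝ :=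
  (√lam)⁻¹ • Zᵀ *ᵥ v

theorem orthonormal_principalDirection {ι : Type*} [DecidableEq ι] {v : ι → m → ℝ} {lam : ι → ℝ}
    (hlam : ∀ j, 0 < lam j) (heig : ∀ j, (Z * Zᵀ) *ᵥ v j = lam j • v j)
    (horth : ∀ i j, v i ⬝ᵥ v j = if i = j then 1 else 0) :
    Orthonormal ℝ fun j => WithLp.toLp 2 (principalDirection Z (lam j) (v j)) := by
  rw [orthonormal_toLp_iff_dotProduct]
  intro i j
  rw [principalDirection, principalDirection, smul_dotProduct, dotProduct_smul,
    transpose_mulVec_dotProduct_transpose_mulVec, heig, dotProduct_smul, horth]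
  split_ifs with hij
  · subst hij
    rw [smul_eq_mul, smul_eq_mul, smul_eq_mul, mul_one, ← mul_assoc, ← mul_inv,
      Real.mul_self_sqrt (hlam i).le, inv_mul_cancel₀ (hlam i).ne']
  · simp

theorem principalDirection_dotProduct_sq {lam : ℝ} (hlam : 0 ≤ lam) (v : m → ℝ) (w : n → ℝ) :
    (principalDirection Z lam v ⬝ᵥ w) ^ 2 = (v ⬝ᵥ Z *ᵥ w) ^ 2 / lam := by
  rw [principalDirection, smul_dotProduct, mulVec_transpose, ← dotProduct_mulVec, smul_eq_mul,
    mul_pow, inv_pow, Real.sq_sqrt hlam, inv_mul_eq_div]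

end KernelPCA

/-- Given `K = Z Zᵀ` and a finite orthonormal family `{v_j}` with
`K v_j = λ_j v_j`, `λ_j > 0`, and `u_j = λ_j^{-1/2} Zᵀ v_j`, for any `w` with kernel
vector `k_w = Z w`:
`‖w − Σ_j ⟨u_j, w⟩ u_j‖₂² = ‖w‖₂² − Σ_j (v_jᵀ k_w)² / λ_j`. -/
theorem stmt_6 (N M : ℕ) (Z : Matrix (Fin N) (Fin M) ℝ)
    (K : Matrix (Fin N) (Fin N) ℝ) (hK : K = Z * Zᵀ)
    (ι : Type*) [Fintype ι] [DecidableEq ι]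
    (v : ι → (Fin N → ℝ)) (lam : ι → ℝ)
    (hlam : ∀ j, 0 < lam j)
    (heig : ∀ j, K.mulVec (v j) = lam j • v j)
    (horth : ∀ i j, v i ⬝ᵥ v j = if i = j then (1 : ℝ) else 0)
    (u : ι → (Fin M → ℝ))
    (hu : ∀ j, u j = (Real.sqrt (lam j))⁻¹ • Zᵀ.mulVec (v j))
    (w : Fin M → ℝ) (kw : Fin N → ℝ) (hkw : kw = Z.mulVec w) :
    ‖(WithLp.equiv 2 (Fin M → ℝ)).symm (w - ∑ j, (u j ⬝ᵥ w) • u j)‖ ^ 2 =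
      ‖(WithLp.equiv 2 (Fin M → ℝ)).symm w‖ ^ 2 - ∑ j, (v j ⬝ᵥ kw) ^ 2 / lam j := by
  subst hK hkw
  obtain rfl : u = fun j => principalDirection Z (lam j) (v j) := funext hu
  have hbessel := (orthonormal_principalDirection Z hlam heig horth).norm_sub_sum_inner_smul_sq
    Finset.univ (WithLp.toLp 2 w)
  simp only [EuclideanSpace.inner_toLp_toLp, star_trivial, Real.norm_eq_abs, sq_abs,
    dotProduct_comm w] at hbessel
  simpa only [WithLp.equiv_symm_apply, WithLp.toLp_sub, WithLp.toLp_sum, WithLp.toLp_smul,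
    ← principalDirection_dotProduct_sq Z (hlam _).le] using hbessel
end

section
/- Fix σ > 0 and dimension m. Let ω ∈ ℝ^m have independent coordinates, each distributed according to the Gaussian measure with mean 0 and variance σ², and let u be an independent random variable uniformly distributed on [0, 2π]. Then for all x, y ∈ ℝ^m, E_{ω,u}[2 cos(⟨ω, x⟩ + u) cos(⟨ω, y⟩ + u)] = exp(−σ²‖x − y‖₂²/2). In particular, taking σ² = 2γ, the random Fourier feature product is an unbiased estimator of the Gaussian kernel k_gau(x, y) = exp(−γ‖x − y‖₂²). -/
/-!
Averaging over the uniform phase `u` first, the product-to-sum formula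
`2 cos(a + u) cos(b + u) = cos(a - b) + cos(a + b + 2u)` leaves `cos ⟨ω, x - y⟩`, since the
second term integrates to zero over a full period. The remaining Gaussian average is the real
part of the characteristic function of the product measure at `x - y`, which factors over the
coordinates into `∏ exp(-σ² (xᵢ - yᵢ)² / 2)`.
-/

open MeasureTheory ProbabilityTheory Real
open scoped NNReal

lemma two_mul_cos_add_mul_cos_add (a b u : ℝ) :
    2 * cos (a + u) * cos (b + u) = cos (a - b) + cos (2 * u + (a + b)) := by
  rw [cos_add_cos, ← cos_neg ((a - b - _) / 2)]
  congr 3 <;> ring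

lemma integral_cos_two_mul_add_zero_two_pi (c : ℝ) :
    ∫ u in 0..2 * π, cos (2 * u + c) = 0 := by
  rw [intervalIntegral.integral_comp_mul_add cos two_ne_zero, integral_cos,
    show 2 * (2 * π) + c = c + 2 * π + 2 * π by ring, sin_add_two_pi, sin_add_two_pi, mul_zero,
    zero_add, sub_self, smul_zero]

lemma integral_two_mul_cos_add_mul_cos_add_uniform (a b : ℝ) :
    ∫ u, 2 * cos (a + u) * cos (b + u)
        ∂((ENNReal.ofReal (2 * π))⁻¹ • volume.restrict (Set.Icc (0 : ℝ) (2 * π))) =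
      cos (a - b) := by
  have h2π : (0 : ℝ) < 2 * π := by positivity
  rw [integral_smul_measure, integral_Icc_eq_integral_Ioc,
    ← intervalIntegral.integral_of_le h2π.le]
  simp_rw [two_mul_cos_add_mul_cos_add]
  rw [intervalIntegral.integral_add intervalIntegrable_const
      (Continuous.intervalIntegrable (by fun_prop) _ _), integral_cos_two_mul_add_zero_two_pi,
    intervalIntegral.integral_const, ENNReal.toReal_inv, ENNReal.toReal_ofReal h2π.le, sub_zero,
    add_zero, smul_eq_mul, smul_eq_mul]
  field_simp

lemma integral_cos_sum_mul_pi_gaussianReal {ι : Type*} [Fintype ι] (v : ℝ≥0)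
    (z : EuclideanSpace ℝ ι) :
    ∫ ω : ι → ℝ, cos (∑ i, ω i * z i) ∂Measure.pi (fun _ => gaussianReal 0 v) =
      exp (-v * ‖z‖ ^ 2 / 2) := by
  have hcos : ∀ ω : ι → ℝ, cos (∑ i, ω i * z i) =
      (Complex.exp (inner ℝ (WithLp.toLp 2 ω) z * Complex.I)).re := by
    intro ω
    rw [Complex.exp_ofReal_mul_I_re, PiLp.inner_apply]
    simp [mul_comm]
  have hint : Integrable
      (fun ω : ι → ℝ => Complex.exp (inner ℝ (WithLp.toLp 2 ω) z * Complex.I))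
      (Measure.pi fun _ => gaussianReal 0 v) :=
    Integrable.of_bound (by fun_prop) 1
      (ae_of_all _ fun ω => (Complex.norm_exp_ofReal_mul_I _).le)
  calc ∫ ω : ι → ℝ, cos (∑ i, ω i * z i) ∂Measure.pi (fun _ => gaussianReal 0 v)
      = (∫ ω : ι → ℝ, Complex.exp (inner ℝ (WithLp.toLp 2 ω) z * Complex.I)
          ∂Measure.pi (fun _ => gaussianReal 0 v)).re := by
        simp_rw [hcos]
        exact integral_re hint
    _ = (charFun ((Measure.pi fun _ => gaussianReal 0 v).map (WithLp.toLp 2)) z).re := by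
        rw [charFun_apply, integral_map (by fun_prop) (by fun_prop)]
    _ = exp (-v * ‖z‖ ^ 2 / 2) := by
        simp_rw [charFun_pi, charFun_gaussianReal, ← Complex.exp_sum, Complex.exp_re,
          EuclideanSpace.real_norm_sq_eq]
        simp [← Complex.ofReal_pow, Finset.mul_sum, Finset.sum_div, neg_div]

lemma integrable_two_mul_cos_mul_cos {α : Type*} [MeasurableSpace α] {μ : Measure α}
    [IsFiniteMeasure μ] {f g : α → ℝ} (hf : AEStronglyMeasurable f μ)
    (hg : AEStronglyMeasurable g μ) :
    Integrable (fun p => 2 * cos (f p) * cos (g p)) μ := by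
  refine Integrable.of_bound (by fun_prop) 2 (ae_of_all _ fun p => ?_)
  rw [norm_mul, norm_mul, Real.norm_two, Real.norm_eq_abs, Real.norm_eq_abs]
  nlinarith [abs_cos_le_one (f p), abs_cos_le_one (g p), abs_nonneg (cos (f p))]

theorem stmt_13_general (m : ℕ) (σ : ℝ) (v : NNReal) (hv : (v : ℝ) = σ ^ 2)
    (x y : EuclideanSpace ℝ (Fin m)) :
    ∫ p : (Fin m → ℝ) × ℝ,
        2 * Real.cos ((∑ i, p.1 i * x i) + p.2) * Real.cos ((∑ i, p.1 i * y i) + p.2)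
      ∂((Measure.pi fun _ : Fin m => ProbabilityTheory.gaussianReal 0 v).prod
          ((ENNReal.ofReal (2 * Real.pi))⁻¹ • volume.restrict (Set.Icc (0 : ℝ) (2 * Real.pi)))) =
      Real.exp (-σ ^ 2 * ‖x - y‖ ^ 2 / 2) := by
  have : IsFiniteMeasure
      ((ENNReal.ofReal (2 * π))⁻¹ • volume.restrict (Set.Icc (0 : ℝ) (2 * π))) :=
    Measure.smul_finite _ (by simp [pi_pos])
  rw [integral_prod _ (integrable_two_mul_cos_mul_cos (by fun_prop) (by fun_prop))]
  simp_rw [integral_two_mul_cos_add_mul_cos_add_uniform, ← Finset.sum_sub_distrib, ← mul_sub,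
    ← hv]
  exact integral_cos_sum_mul_pi_gaussianReal v (x - y)

/-- With `ω ∈ ℝ^m` having i.i.d. Gaussian coordinates of mean `0` and
variance `σ²`, and `u` independent uniform on `[0, 2π]`,
`E[2 cos(⟨ω,x⟩ + u) cos(⟨ω,y⟩ + u)] = exp(−σ² ‖x−y‖₂² / 2)` for all `x, y ∈ ℝ^m`;
in particular (`σ² = 2γ`) the random Fourier feature product is an unbiased estimator
of the Gaussian kernel `exp(−γ‖x−y‖₂²)`. -/
theorem stmt_13 (m : ℕ) (σ : ℝ) (hσ : 0 < σ) (v : NNReal) (hv : (v : ℝ) = σ ^ 2)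
    (x y : EuclideanSpace ℝ (Fin m)) :
    ∫ p : (Fin m → ℝ) × ℝ,
        2 * Real.cos ((∑ i, p.1 i * x i) + p.2) * Real.cos ((∑ i, p.1 i * y i) + p.2)
      ∂((Measure.pi fun _ : Fin m => ProbabilityTheory.gaussianReal 0 v).prod
          ((ENNReal.ofReal (2 * Real.pi))⁻¹ • volume.restrict (Set.Icc (0 : ℝ) (2 * Real.pi)))) =
      Real.exp (-σ ^ 2 * ‖x - y‖ ^ 2 / 2) :=
  stmt_13_general m σ v hv x y
end
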